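/- Let d ≥ 1 and let μ be a probability measure on ℝ^d with finite fourth moment (∫‖x‖₂⁴ dμ(x) < ∞). Then the largest eigenvalue of the fourth moment operator satisfies λ₁(T_μ) ≥ (1/d) · Σ_{i=1}^{d(d+1)/2} λ_i(T_μ), i.e., λ₁(T_μ) is at least d/2 times the average of all d(d+1)/2 eigenvalues of T_μ. -/

import Mathlib

/-! The sum of the eigenvalues of `T_μ` is its trace, `∫ ‖xxᵀ‖² dμ = ∫ ‖x‖⁴ dμ`. The same integral is
`⟨T_μ I, I⟩ = ∫ ⟨I, xxᵀ⟩² dμ`, and the Rayleigh bound `⟨T_μ I, I⟩ ≤ λ₁ ‖I‖² = d λ₁` finishes. -/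

open MeasureTheory
open scoped ENNReal RealInnerProductSpace Classical

noncomputable section

/-- The outer product `x xᵀ` of a vector in Euclidean space, as a matrix. -/
def outer {d : ℕ} (x : EuclideanSpace ℝ (Fin d)) : Matrix (Fin d) (Fin d) ℝ :=
  Matrix.of fun i j => x i * x j

/-- The trace inner product `⟨A, B⟩ = Tr (A B)` on symmetric matrices. -/
def minner {d : ℕ} (A B : Matrix (Fin d) (Fin d) ℝ) : ℝ :=
  Matrix.trace (A * B)

/-- The Frobenius norm of a matrix. -/
def frobNorm {d : ℕ} (M : Matrix (Fin d) (Fin d) ℝ) : ℝ :=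
  Real.sqrt (∑ i, ∑ j, (M i j) ^ 2)

/-- Entrywise integral of a matrix-valued function. -/
def mIntegral {d : ℕ} (μ : Measure (EuclideanSpace ℝ (Fin d)))
    (F : EuclideanSpace ℝ (Fin d) → Matrix (Fin d) (Fin d) ℝ) :
    Matrix (Fin d) (Fin d) ℝ :=
  Matrix.of fun i j => ∫ x, F x i j ∂μ

/-- The fourth moment operator `T_μ (A) = ∫ ⟨A, xxᵀ⟩ xxᵀ dμ(x)`. -/
def fourthMomentOp {d : ℕ} (μ : Measure (EuclideanSpace ℝ (Fin d)))
    (A : Matrix (Fin d) (Fin d) ℝ) : Matrix (Fin d) (Fin d) ℝ :=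
  mIntegral μ (fun x => minner A (outer x) • outer x)

/-- The second moment matrix `B = ∫ xxᵀ dμ(x)`. -/
def secondMoment {d : ℕ} (μ : Measure (EuclideanSpace ℝ (Fin d))) :
    Matrix (Fin d) (Fin d) ℝ :=
  mIntegral μ outer

/-- `lam : ℕ → ℝ` lists the eigenvalues (with multiplicity) of the fourth moment operator
`T_μ`, viewed as an operator on the `d(d+1)/2`-dimensional inner product space of symmetric
matrices, in descending order, padded by `0` beyond index `d(d+1)/2`. -/
def IsEigenSeq {d : ℕ} (μ : Measure (EuclideanSpace ℝ (Fin d))) (lam : ℕ → ℝ) : Prop :=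
  Antitone lam ∧ (∀ i, d * (d + 1) / 2 ≤ i → lam i = 0) ∧
  ∃ b : Fin (d * (d + 1) / 2) → Matrix (Fin d) (Fin d) ℝ,
    (∀ i, (b i).IsSymm) ∧
    (∀ i j, minner (b i) (b j) = if i = j then 1 else 0) ∧
    (∀ A : Matrix (Fin d) (Fin d) ℝ, A.IsSymm → A ∈ Submodule.span ℝ (Set.range b)) ∧
    (∀ i : Fin (d * (d + 1) / 2), fourthMomentOp μ (b i) = lam i • b i)

/-- The second order separation parameter `s(μ)`. -/
def sep {d : ℕ} (μ : Measure (EuclideanSpace ℝ (Fin d))) : ℝ :=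
  (1 / 2) * sSup { r : ℝ | ∃ μ₁ μ₂ : Measure (EuclideanSpace ℝ (Fin d)),
    IsProbabilityMeasure μ₁ ∧ IsProbabilityMeasure μ₂ ∧
    μ = (2 : ℝ≥0∞)⁻¹ • μ₁ + (2 : ℝ≥0∞)⁻¹ • μ₂ ∧
    r = frobNorm (secondMoment μ₁ - secondMoment μ₂) }

/-- The standard Gaussian measure `N(0, I)` on `ℝ^d`. -/
def stdGaussian (d : ℕ) : Measure (EuclideanSpace ℝ (Fin d)) :=
  (Measure.pi fun _ : Fin d => ProbabilityTheory.gaussianReal 0 1).map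
    (MeasurableEquiv.toLp 2 (Fin d → ℝ))

/-- The old Mathlib `Matrix.PosSemidef.sqrt`, spelled out. -/
def psdSqrtOld {d : ℕ} {B : Matrix (Fin d) (Fin d) ℝ} (hB : B.PosSemidef) :
    Matrix (Fin d) (Fin d) ℝ :=
  (hB.1.eigenvectorUnitary : Matrix (Fin d) (Fin d) ℝ) *
    Matrix.diagonal ((↑) ∘ (√·) ∘ hB.1.eigenvalues) *
    (star (hB.1.eigenvectorUnitary : Matrix (Fin d) (Fin d) ℝ))

/-- The centered Gaussian measure `N(0, B)` on `ℝ^d` with positive semidefinite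
covariance matrix `B`, obtained as the pushforward of `N(0, I)` by `B^{1/2}`. -/
def gaussianCov {d : ℕ} (B : Matrix (Fin d) (Fin d) ℝ) :
    Measure (EuclideanSpace ℝ (Fin d)) :=
  if hB : B.PosSemidef then (stdGaussian d).map (fun x => Matrix.toEuclideanLin (psdSqrtOld hB) x)
  else 0

/-- The positive semidefinite square root `B^{1/2}` of a positive semidefinite matrix. -/
def psdSqrt {d : ℕ} (B : Matrix (Fin d) (Fin d) ℝ) : Matrix (Fin d) (Fin d) ℝ :=
  if hB : B.PosSemidef then psdSqrtOld hB else 0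

section

variable {d : ℕ}

lemma minner_eq_sum (A B : Matrix (Fin d) (Fin d) ℝ) :
    minner A B = ∑ i, ∑ j, A i j * B j i := by
  simp [minner, Matrix.trace, Matrix.mul_apply]

lemma minner_comm (A B : Matrix (Fin d) (Fin d) ℝ) : minner A B = minner B A :=
  Matrix.trace_mul_comm A B

lemma minner_smul_left (c : ℝ) (A B : Matrix (Fin d) (Fin d) ℝ) :
    minner (c • A) B = c * minner A B := by
  simp [minner]

lemma minner_sum_smul_left {ι : Type*} [Fintype ι] (c : ι → ℝ)
    (b : ι → Matrix (Fin d) (Fin d) ℝ) (M : Matrix (Fin d) (Fin d) ℝ) :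
    minner (∑ i, c i • b i) M = ∑ i, c i * minner (b i) M := by
  simp [minner, Matrix.sum_mul]

lemma minner_one_one : minner (1 : Matrix (Fin d) (Fin d) ℝ) 1 = d := by
  simp [minner]

lemma outer_isSymm (x : EuclideanSpace ℝ (Fin d)) : (outer x).IsSymm := by
  ext i j
  simp [outer, mul_comm]

lemma minner_one_outer (x : EuclideanSpace ℝ (Fin d)) : minner 1 (outer x) = ‖x‖ ^ 2 := by
  rw [EuclideanSpace.real_norm_sq_eq]
  simp [minner, Matrix.trace, outer, sq]

lemma minner_outer_outer (x : EuclideanSpace ℝ (Fin d)) :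
    minner (outer x) (outer x) = ‖x‖ ^ 4 := by
  rw [minner_eq_sum, show 4 = 2 * 2 by rfl, pow_mul, EuclideanSpace.real_norm_sq_eq, sq,
    Finset.sum_mul_sum]
  simp only [outer, Matrix.of_apply]
  exact Finset.sum_congr rfl fun i _ => Finset.sum_congr rfl fun j _ => by ring

lemma abs_minner_outer_le (A : Matrix (Fin d) (Fin d) ℝ) (x : EuclideanSpace ℝ (Fin d)) :
    |minner A (outer x)| ≤ (∑ i, ∑ j, |A i j|) * ‖x‖ ^ 2 := by
  rw [minner_eq_sum, Finset.sum_mul]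
  refine (Finset.abs_sum_le_sum_abs _ _).trans (Finset.sum_le_sum fun i _ => ?_)
  rw [Finset.sum_mul]
  refine (Finset.abs_sum_le_sum_abs _ _).trans (Finset.sum_le_sum fun j _ => ?_)
  rw [outer, Matrix.of_apply, abs_mul, abs_mul, sq]
  gcongr
  · exact PiLp.norm_apply_le x j
  · exact PiLp.norm_apply_le x i

lemma continuous_minner_outer (A : Matrix (Fin d) (Fin d) ℝ) :
    Continuous fun x : EuclideanSpace ℝ (Fin d) => minner A (outer x) := by
  simp only [minner_eq_sum, outer, Matrix.of_apply]
  fun_prop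

lemma integrable_minner_outer_mul {μ : Measure (EuclideanSpace ℝ (Fin d))}
    (h4 : Integrable (fun x => ‖x‖ ^ 4) μ) (A C : Matrix (Fin d) (Fin d) ℝ) :
    Integrable (fun x => minner A (outer x) * minner C (outer x)) μ := by
  refine (h4.const_mul ((∑ i, ∑ j, |A i j|) * ∑ i, ∑ j, |C i j|)).mono'
    ((continuous_minner_outer A).mul (continuous_minner_outer C)).aestronglyMeasurable
    (.of_forall fun x => ?_)
  rw [Real.norm_eq_abs, abs_mul]
  calc _ ≤ ((∑ i, ∑ j, |A i j|) * ‖x‖ ^ 2) * ((∑ i, ∑ j, |C i j|) * ‖x‖ ^ 2) := by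
        gcongr
        · exact abs_minner_outer_le A x
        · exact abs_minner_outer_le C x
    _ = _ := by ring

lemma outer_apply_eq_minner_single (x : EuclideanSpace ℝ (Fin d)) (i j : Fin d) :
    outer x i j = minner (Matrix.single j i 1) (outer x) := by
  rw [minner_eq_sum]
  simp [Matrix.single_apply, ite_and]

lemma minner_mIntegral {μ : Measure (EuclideanSpace ℝ (Fin d))}
    {F : EuclideanSpace ℝ (Fin d) → Matrix (Fin d) (Fin d) ℝ}
    (hF : ∀ i j, Integrable (fun x => F x i j) μ) (C : Matrix (Fin d) (Fin d) ℝ) :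
    minner (mIntegral μ F) C = ∫ x, minner (F x) C ∂μ := by
  simp only [minner_eq_sum, mIntegral, Matrix.of_apply]
  rw [integral_finsetSum _ fun i _ => integrable_finsetSum _ fun j _ => (hF i j).mul_const _]
  refine Finset.sum_congr rfl fun i _ => ?_
  rw [integral_finsetSum _ fun j _ => (hF i j).mul_const _]
  exact Finset.sum_congr rfl fun j _ => (integral_mul_const _ _).symm

lemma minner_fourthMomentOp {μ : Measure (EuclideanSpace ℝ (Fin d))}
    (h4 : Integrable (fun x => ‖x‖ ^ 4) μ) (A C : Matrix (Fin d) (Fin d) ℝ) :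
    minner (fourthMomentOp μ A) C = ∫ x, minner A (outer x) * minner C (outer x) ∂μ := by
  have hentry (i j : Fin d) (x : EuclideanSpace ℝ (Fin d)) :
      (minner A (outer x) • outer x) i j =
        minner A (outer x) * minner (Matrix.single j i 1) (outer x) := by
    rw [Matrix.smul_apply, outer_apply_eq_minner_single, smul_eq_mul]
  rw [fourthMomentOp, minner_mIntegral fun i j => by
    simpa only [hentry] using integrable_minner_outer_mul h4 A _]
  simp only [minner_smul_left, minner_comm (outer _) C]

lemma minner_fourthMomentOp_comm {μ : Measure (EuclideanSpace ℝ (Fin d))}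
    (h4 : Integrable (fun x => ‖x‖ ^ 4) μ) (A C : Matrix (Fin d) (Fin d) ℝ) :
    minner (fourthMomentOp μ A) C = minner (fourthMomentOp μ C) A := by
  simp only [minner_fourthMomentOp h4, mul_comm]

section OrthonormalEigenbasis

variable {ι : Type*} [Fintype ι] [DecidableEq ι] {b : ι → Matrix (Fin d) (Fin d) ℝ}

lemma minner_eq_sum_mul_of_mem_span (hb : ∀ i j, minner (b i) (b j) = if i = j then 1 else 0)
    {A : Matrix (Fin d) (Fin d) ℝ} (hA : A ∈ Submodule.span ℝ (Set.range b))
    (C : Matrix (Fin d) (Fin d) ℝ) :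
    minner A C = ∑ i, minner (b i) A * minner (b i) C := by
  obtain ⟨c, rfl⟩ := (Submodule.mem_span_range_iff_exists_fun ℝ).mp hA
  have hcoeff (i : ι) : minner (b i) (∑ j, c j • b j) = c i := by
    rw [minner_comm, minner_sum_smul_left]
    simp [hb]
  simp only [minner_sum_smul_left, hcoeff]

lemma minner_apply_self_eq_sum {T : Matrix (Fin d) (Fin d) ℝ → Matrix (Fin d) (Fin d) ℝ}
    (hT : ∀ A C, minner (T A) C = minner (T C) A) {lam : ι → ℝ}
    (hb : ∀ i j, minner (b i) (b j) = if i = j then 1 else 0)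
    (heig : ∀ i, T (b i) = lam i • b i)
    {A : Matrix (Fin d) (Fin d) ℝ} (hA : A ∈ Submodule.span ℝ (Set.range b)) :
    minner (T A) A = ∑ i, lam i * minner (b i) A ^ 2 := by
  rw [minner_comm, minner_eq_sum_mul_of_mem_span hb hA]
  refine Finset.sum_congr rfl fun i _ => ?_
  rw [minner_comm (b i) (T A), hT, heig, minner_smul_left]
  ring

lemma minner_apply_self_le {T : Matrix (Fin d) (Fin d) ℝ → Matrix (Fin d) (Fin d) ℝ}
    (hT : ∀ A C, minner (T A) C = minner (T C) A) {lam : ι → ℝ}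
    (hb : ∀ i j, minner (b i) (b j) = if i = j then 1 else 0)
    (heig : ∀ i, T (b i) = lam i • b i) {M : ℝ} (hM : ∀ i, lam i ≤ M)
    {A : Matrix (Fin d) (Fin d) ℝ} (hA : A ∈ Submodule.span ℝ (Set.range b)) :
    minner (T A) A ≤ M * minner A A := by
  rw [minner_apply_self_eq_sum hT hb heig hA, minner_eq_sum_mul_of_mem_span hb hA, Finset.mul_sum]
  refine Finset.sum_le_sum fun i _ => ?_
  rw [← sq]
  exact mul_le_mul_of_nonneg_right (hM i) (sq_nonneg _)

lemma sum_eigenvalues_eq_integral_norm_pow_four {μ : Measure (EuclideanSpace ℝ (Fin d))}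
    (h4 : Integrable (fun x => ‖x‖ ^ 4) μ) {lam : ι → ℝ}
    (hb : ∀ i j, minner (b i) (b j) = if i = j then 1 else 0)
    (hspan : ∀ A : Matrix (Fin d) (Fin d) ℝ, A.IsSymm → A ∈ Submodule.span ℝ (Set.range b))
    (heig : ∀ i, fourthMomentOp μ (b i) = lam i • b i) :
    ∑ i, lam i = ∫ x, ‖x‖ ^ 4 ∂μ := by
  have hlam (i : ι) : lam i = ∫ x, minner (b i) (outer x) * minner (b i) (outer x) ∂μ := by
    simpa [heig, minner_smul_left, hb] using minner_fourthMomentOp h4 (b i) (b i)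
  simp only [hlam]
  rw [← integral_finsetSum _ fun i _ => integrable_minner_outer_mul h4 _ _]
  congr with x
  rw [← minner_outer_outer, minner_eq_sum_mul_of_mem_span hb (hspan _ (outer_isSymm x))]

end OrthonormalEigenbasis

lemma minner_fourthMomentOp_one_one {μ : Measure (EuclideanSpace ℝ (Fin d))}
    (h4 : Integrable (fun x => ‖x‖ ^ 4) μ) :
    minner (fourthMomentOp μ 1) 1 = ∫ x, ‖x‖ ^ 4 ∂μ := by
  simp only [minner_fourthMomentOp h4, minner_one_outer, ← pow_add]

end

theorem largest_eigenvalue_lower_bound_general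
    (d : ℕ) (μ : Measure (EuclideanSpace ℝ (Fin d)))
    (h4 : Integrable (fun x => ‖x‖ ^ 4) μ)
    (lam : ℕ → ℝ) (hlam : IsEigenSeq μ lam) :
    (1 / (d : ℝ)) * ∑ i : Fin (d * (d + 1) / 2), lam i ≤ lam 0 := by
  obtain ⟨hanti, hzero, b, -, horth, hspan, heig⟩ := hlam
  rcases Nat.eq_zero_or_pos d with rfl | hd
  · simp [hzero 0 le_rfl]
  have hrayleigh := minner_apply_self_le (minner_fourthMomentOp_comm h4) horth heig
    (fun i : Fin _ => hanti (Nat.zero_le i)) (hspan 1 Matrix.isSymm_one)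
  rw [minner_fourthMomentOp_one_one h4, minner_one_one,
    ← sum_eigenvalues_eq_integral_norm_pow_four h4 horth hspan heig] at hrayleigh
  rw [one_div, inv_mul_le_iff₀ (by positivity)]
  linarith

/-- the largest eigenvalue of `T_μ` is at least `1/d` times the sum of all
`d(d+1)/2` eigenvalues of `T_μ`. -/
theorem largest_eigenvalue_lower_bound
    (d : ℕ) (hd : 1 ≤ d) (μ : Measure (EuclideanSpace ℝ (Fin d)))
    [IsProbabilityMeasure μ] (h4 : Integrable (fun x => ‖x‖ ^ 4) μ)
    (lam : ℕ → ℝ) (hlam : IsEigenSeq μ lam) :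
    (1 / (d : ℝ)) * ∑ i : Fin (d * (d + 1) / 2), lam i ≤ lam 0 :=
  largest_eigenvalue_lower_bound_general d μ h4 lam hlam
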